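/- Suppose x^sym_ij lies on the segment boundary such that the direction condition r^sym_ij = −t r_ij holds with t > 0, where r_ij = x_j − x_i. If u_h restricted to the macroelement Ω_i is linear and the jump and mean are defined as ⟦∇u⟧_{ij} = (u_j−u_i)/|r_ij| + (u^sym_ij−u_i)/|r^sym_ij| and {|∇u·r̂|}_{ij} = ½(|u_j−u_i|/|r_ij| + |u^sym_ij−u_i|/|r^sym_ij|), then ⟦∇u⟧_{ij} = 0 while {|∇u·r̂|}_{ij} = |∇u·r̂_ij|; hence the detector α_i = (|Σ_j ⟦∇u⟧_{ij}| / Σ_j 2{|∇u·r̂|}_{ij})^q is 0 whenever some directional derivative is nonzero. -/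

import Mathlib

/-!
For `u x = ⟪a, x⟫ + c` the difference quotient from `x` towards `y` is `⟪a, normalize (y - x)⟫`.
The symmetric point lies in the opposite unit direction, so its quotient is the negative of the
one towards `xj`: the jump cancels and the mean of absolute values is `|⟪a, r̂⟫|`. The detector
then has numerator `0`.
-/

open NormedSpace RealInnerProductSpace

section AffineGradient

variable {E : Type*} [NormedAddCommGroup E] [InnerProductSpace ℝ E]

/-- The paper's `⟦∇u⟧_ij`, with `xs` the symmetric point `x^sym_ij`. -/
noncomputable def gradJump (u : E → ℝ) (xi xj xs : E) : ℝ :=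
  (u xj - u xi) / ‖xj - xi‖ + (u xs - u xi) / ‖xs - xi‖

/-- The paper's `{|∇u·r̂|}_ij`. -/
noncomputable def gradAbsMean (u : E → ℝ) (xi xj xs : E) : ℝ :=
  1 / 2 * (|u xj - u xi| / ‖xj - xi‖ + |u xs - u xi| / ‖xs - xi‖)

variable {u : E → ℝ} {a : E} {c : ℝ}

/-- Also true for `y = x`: both sides are `0` since `z / 0 = 0` and `normalize 0 = 0`. -/
theorem sub_div_norm_eq_inner_normalize (hu : ∀ x, u x = ⟪a, x⟫ + c) (x y : E) :
    (u y - u x) / ‖y - x‖ = ⟪a, normalize (y - x)⟫ := by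
  have hdiff : u y - u x = ⟪a, y - x⟫ := by
    rw [hu, hu, inner_sub_right]
    ring
  rw [hdiff, NormedSpace.normalize, inner_smul_right, div_eq_inv_mul]

variable {xi xj xs : E} {t : ℝ}

theorem normalize_sub_eq_neg_of_sym (ht : 0 < t) (hsym : xs - xi = -t • (xj - xi)) :
    normalize (xs - xi) = -normalize (xj - xi) := by
  rw [hsym]
  exact normalize_smul_of_neg (neg_neg_of_pos ht) _

theorem gradJump_eq_zero_of_affine (hu : ∀ x, u x = ⟪a, x⟫ + c) (ht : 0 < t)
    (hsym : xs - xi = -t • (xj - xi)) : gradJump u xi xj xs = 0 := by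
  rw [gradJump, sub_div_norm_eq_inner_normalize hu, sub_div_norm_eq_inner_normalize hu,
    normalize_sub_eq_neg_of_sym ht hsym, inner_neg_right, add_neg_cancel]

theorem gradAbsMean_eq_abs_inner_of_affine (hu : ∀ x, u x = ⟪a, x⟫ + c) (ht : 0 < t)
    (hsym : xs - xi = -t • (xj - xi)) :
    gradAbsMean u xi xj xs = |⟪a, normalize (xj - xi)⟫| := by
  have habs (y : E) : |u y - u xi| / ‖y - xi‖ = |⟪a, normalize (y - xi)⟫| := by
    rw [← sub_div_norm_eq_inner_normalize hu, abs_div, abs_norm]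
  rw [gradAbsMean, habs, habs, normalize_sub_eq_neg_of_sym ht hsym, inner_neg_right, abs_neg]
  ring

end AffineGradient

theorem linearity_preservation_general {d : ℕ} {J : Type*} [Fintype J]
    (a : EuclideanSpace ℝ (Fin d)) (c : ℝ)
    (u : EuclideanSpace ℝ (Fin d) → ℝ) (hu : ∀ x, u x = inner ℝ a x + c)
    (xi : EuclideanSpace ℝ (Fin d)) (xj xsym : J → EuclideanSpace ℝ (Fin d))
    (t : J → ℝ) (ht : ∀ j, 0 < t j)
    (hsym : ∀ j, xsym j - xi = -(t j) • (xj j - xi))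
    (q : ℝ) (hq : 1 ≤ q) :
    (∀ j, (u (xj j) - u xi) / ‖xj j - xi‖ + (u (xsym j) - u xi) / ‖xsym j - xi‖ = 0) ∧
    (∀ j, (1 / 2) * (|u (xj j) - u xi| / ‖xj j - xi‖ + |u (xsym j) - u xi| / ‖xsym j - xi‖)
        = |(inner ℝ a ((‖xj j - xi‖)⁻¹ • (xj j - xi)) : ℝ)|) ∧
    ((∃ j, (inner ℝ a (xj j - xi) : ℝ) ≠ 0) →
      (|∑ j, ((u (xj j) - u xi) / ‖xj j - xi‖ + (u (xsym j) - u xi) / ‖xsym j - xi‖)| /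
        ∑ j, 2 * ((1 / 2) * (|u (xj j) - u xi| / ‖xj j - xi‖ +
          |u (xsym j) - u xi| / ‖xsym j - xi‖))) ^ q = 0) := by
  have hjump (j : J) : gradJump u xi (xj j) (xsym j) = 0 :=
    gradJump_eq_zero_of_affine hu (ht j) (hsym j)
  have hmean (j : J) : gradAbsMean u xi (xj j) (xsym j) = |⟪a, normalize (xj j - xi)⟫| :=
    gradAbsMean_eq_abs_inner_of_affine hu (ht j) (hsym j)
  unfold gradJump at hjump
  refine ⟨hjump, hmean, fun _ => ?_⟩
  rw [Finset.sum_eq_zero fun j _ => hjump j, abs_zero, zero_div,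
    Real.zero_rpow (by linarith)]

theorem linearity_preservation {d : ℕ} {J : Type*} [Fintype J]
    (a : EuclideanSpace ℝ (Fin d)) (c : ℝ)
    (u : EuclideanSpace ℝ (Fin d) → ℝ) (hu : ∀ x, u x = inner ℝ a x + c)
    (xi : EuclideanSpace ℝ (Fin d)) (xj xsym : J → EuclideanSpace ℝ (Fin d))
    (t : J → ℝ) (ht : ∀ j, 0 < t j) (hne : ∀ j, xj j ≠ xi)
    (hsym : ∀ j, xsym j - xi = -(t j) • (xj j - xi))
    (q : ℝ) (hq : 1 ≤ q) :
    (∀ j, (u (xj j) - u xi) / ‖xj j - xi‖ + (u (xsym j) - u xi) / ‖xsym j - xi‖ = 0) ∧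
    (∀ j, (1 / 2) * (|u (xj j) - u xi| / ‖xj j - xi‖ + |u (xsym j) - u xi| / ‖xsym j - xi‖)
        = |(inner ℝ a ((‖xj j - xi‖)⁻¹ • (xj j - xi)) : ℝ)|) ∧
    ((∃ j, (inner ℝ a (xj j - xi) : ℝ) ≠ 0) →
      (|∑ j, ((u (xj j) - u xi) / ‖xj j - xi‖ + (u (xsym j) - u xi) / ‖xsym j - xi‖)| /
        ∑ j, 2 * ((1 / 2) * (|u (xj j) - u xi| / ‖xj j - xi‖ +
          |u (xsym j) - u xi| / ‖xsym j - xi‖))) ^ q = 0) :=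
  linearity_preservation_general a c u hu xi xj xsym t ht hsym q hq
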